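/- The eta quotient psi9(z) = η(z)^3 / η(9z)^3 has Fourier expansion beginning q^{-1} - 3 + 5q^2 - 7q^5 + ..., with no q^0-free terms of exponent 0 or 1 other than the constant -3 and vanishing q^1 coefficient. -/

import Mathlib

/-!
Write `q = e^{2πiz}` and `E(q) = ∏_{n ≥ 1} (1 - qⁿ)`, so that `ψ₉(z) = q⁻¹ E(q)³ / E(q⁹)³`, where
`E` is holomorphic and zero-free on the unit disc. Since `‖∏ (1 + fᵢ) - 1‖ ≤ exp (∑ ‖fᵢ‖) - 1`,
the factors with `n ≥ 7` only contribute `1 + O(q⁷)`, so `E(q) ≡ 1 - q - q² + q⁵` and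
`E(q⁹) ≡ 1` modulo `O(q⁷)`, whence `E(q)³ / E(q⁹)³ = 1 - 3q + 5q³ - 7q⁶ + O(q⁷)`. By the removable
singularity theorem the error term is `q⁷` times a function holomorphic on the disc, and its
Taylor series supplies the remaining coefficients.
-/

open Complex UpperHalfPlane

noncomputable def qq (z : ℂ) : ℂ := Complex.exp (2 * Real.pi * Complex.I * z)

noncomputable def dedekindEta (z : ℂ) : ℂ :=
  Complex.exp (Real.pi * Complex.I * z / 12) * ∏' n : ℕ, (1 - qq ((n + 1) * z))

noncomputable def psi9 (z : ℂ) : ℂ := dedekindEta z ^ 3 / dedekindEta (9 * z) ^ 3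

open Asymptotics Filter Finset Metric Polynomial Topology

section Asymptotics

variable {α 𝕜 : Type*} [NormedField 𝕜] {l : Filter α} {f g h : α → 𝕜} {c : 𝕜}

theorem Filter.Tendsto.mul_isBigO (hh : Tendsto h l (𝓝 c)) (hf : f =O[l] g) :
    (fun x ↦ h x * f x) =O[l] g := by
  simpa only [one_mul] using (hh.isBigO_one 𝕜).mul hf

theorem Asymptotics.IsBigO.pow_sub_pow {u v : α → 𝕜} {a b : 𝕜} (hu : Tendsto u l (𝓝 a))
    (hv : Tendsto v l (𝓝 b)) (huv : (fun x ↦ u x - v x) =O[l] g) (k : ℕ) :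
    (fun x ↦ u x ^ k - v x ^ k) =O[l] g := by
  have hgeom : Tendsto (fun x ↦ ∑ i ∈ range k, u x ^ i * v x ^ (k - 1 - i)) l
      (𝓝 (∑ i ∈ range k, a ^ i * b ^ (k - 1 - i))) :=
    tendsto_finsetSum _ fun i _ ↦ (hu.pow i).mul (hv.pow _)
  simpa only [geom_sum₂_mul] using hgeom.mul_isBigO huv

end Asymptotics

theorem norm_tprod_one_add_sub_one_le {ι R : Type*} [NormedCommRing R] [NormOneClass R]
    [CompleteSpace R] {f : ι → R} (hf : Summable fun i ↦ ‖f i‖) :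
    ‖∏' i, (1 + f i) - 1‖ ≤ Real.exp (∑' i, ‖f i‖) - 1 := by
  refine le_of_tendsto' (((multipliable_one_add_of_summable hf).hasProd.sub_const 1).norm)
    fun s ↦ (s.norm_prod_one_add_sub_one_le f).trans ?_
  gcongr
  exact hf.sum_le_tsum s fun i _ ↦ norm_nonneg _

section TailProduct

variable {𝕜 : Type*} [NormedField 𝕜]

theorem hasSum_norm_pow_add {q : 𝕜} (hq : ‖q‖ < 1) (m : ℕ) :
    HasSum (fun n : ℕ ↦ ‖q ^ (n + m + 1)‖) (‖q‖ ^ (m + 1) * (1 - ‖q‖)⁻¹) :=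
  ((hasSum_geometric_of_lt_one (norm_nonneg q) hq).mul_left (‖q‖ ^ (m + 1))).congr_fun
    fun n ↦ by rw [norm_pow, ← pow_add]; ring_nf

theorem multipliable_one_sub_pow_add [CompleteSpace 𝕜] {q : 𝕜} (hq : ‖q‖ < 1) (m : ℕ) :
    Multipliable fun n : ℕ ↦ 1 - q ^ (n + m + 1) := by
  simp_rw [sub_eq_add_neg]
  exact multipliable_one_add_of_summable (by simpa using (hasSum_norm_pow_add hq m).summable)

theorem tprod_one_sub_pow_add_sub_one_isBigO [CompleteSpace 𝕜] (m : ℕ) :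
    (fun q : 𝕜 ↦ ∏' n : ℕ, (1 - q ^ (n + m + 1)) - 1) =O[𝓝 0] fun q ↦ q ^ (m + 1) := by
  refine .of_bound 4 ?_
  filter_upwards [closedBall_mem_nhds (0 : 𝕜) (by norm_num : (0 : ℝ) < 1 / 2)] with q hq
  rw [mem_closedBall_zero_iff] at hq
  have hq1 : ‖q‖ < 1 := hq.trans_lt (by norm_num)
  set s := ‖q‖ ^ (m + 1) * (1 - ‖q‖)⁻¹ with hs_def
  have hsum : HasSum (fun n : ℕ ↦ ‖-q ^ (n + m + 1)‖) s := by
    simpa only [norm_neg] using hasSum_norm_pow_add hq1 m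
  have hs : s ≤ 2 * ‖q‖ ^ (m + 1) := by
    rw [hs_def, mul_comm 2]
    gcongr
    rw [inv_le_comm₀ (by linarith) (by norm_num)]
    linarith
  have hs0 : 0 ≤ s := hsum.nonneg fun _ ↦ norm_nonneg _
  have hs1 : |s| ≤ 1 := by
    rw [abs_of_nonneg hs0]
    linarith [pow_le_of_le_one (norm_nonneg q) hq1.le (by omega : m + 1 ≠ 0)]
  calc ‖∏' n : ℕ, (1 - q ^ (n + m + 1)) - 1‖
      = ‖∏' n : ℕ, (1 + -q ^ (n + m + 1)) - 1‖ := by simp only [sub_eq_add_neg]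
    _ ≤ Real.exp s - 1 := hsum.tsum_eq ▸ norm_tprod_one_add_sub_one_le hsum.summable
    _ ≤ 2 * s := by
      simpa only [abs_of_nonneg hs0] using (le_abs_self _).trans (Real.abs_exp_sub_one_le hs1)
    _ ≤ 4 * ‖q ^ (m + 1)‖ := by rw [norm_pow]; linarith

end TailProduct

theorem Polynomial.hasSum_coeff_mul_pow {R : Type*} [Semiring R] [TopologicalSpace R]
    (p : R[X]) (x : R) : HasSum (fun k ↦ p.coeff k * x ^ k) (p.eval x) := by
  rw [eval_eq_sum_range]
  exact hasSum_sum_of_ne_finset_zero fun k hk ↦ by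
    rw [coeff_eq_zero_of_natDegree_lt (by simpa [Nat.lt_succ_iff] using hk), zero_mul]

theorem exists_differentiableOn_eq_pow_mul {f : ℂ → ℂ} {s : Set ℂ} (hs : s ∈ 𝓝 0)
    (hf : DifferentiableOn ℂ f s) {n : ℕ} (hfn : f =O[𝓝 0] fun q ↦ q ^ n) :
    ∃ g : ℂ → ℂ, DifferentiableOn ℂ g s ∧ ∀ q ∈ s, f q = q ^ n * g q := by
  set g₀ : ℂ → ℂ := fun q ↦ f q / q ^ n
  have hg₀ : g₀ =O[𝓝[≠] 0] fun _ ↦ (1 : ℂ) := by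
    refine ((hfn.mono nhdsWithin_le_nhds).mul (isBigO_refl (fun q : ℂ ↦ (q ^ n)⁻¹) _)).congr'
      (.of_eq rfl) ?_
    filter_upwards [self_mem_nhdsWithin] with q hq
    exact mul_inv_cancel₀ (pow_ne_zero n hq)
  have hsmall : (fun q ↦ g₀ q - g₀ 0) =o[𝓝[≠] 0] fun q ↦ (q - 0)⁻¹ :=
    (hg₀.sub (isBigO_const_const _ one_ne_zero _)).trans_isLittleO
      isBoundedUnder_const.isLittleO_sub_self_inv
  set g := Function.update g₀ 0 (limUnder (𝓝[≠] 0) g₀)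
  have hg : DifferentiableOn ℂ g s :=
    differentiableOn_update_limUnder_of_isLittleO hs
      ((hf.mono Set.sdiff_subset).div (by fun_prop) fun q hq ↦ pow_ne_zero n hq.2) hsmall
  have hfg : ∀ q ≠ 0, f q = q ^ n * g q := fun q hq ↦ by
    rw [show g q = f q / q ^ n from Function.update_of_ne hq ..]
    field_simp
  refine ⟨g, hg, fun q _ ↦ ?_⟩
  rcases eq_or_ne q 0 with rfl | hq
  · have hcont : ContinuousAt (fun q ↦ q ^ n * g q) 0 :=
      (continuousAt_id.pow n).mul (hg.continuousOn.continuousAt hs)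
    refine ((hf.continuousOn.continuousAt hs).eventuallyEq_nhds_iff_eventuallyEq_nhdsNE
      hcont |>.mp ?_).eq_of_nhds
    filter_upwards [self_mem_nhdsWithin] with q hq using hfg q hq
  · exact hfg q hq

theorem exists_hasSum_of_isBigO_sub_eval {f : ℂ → ℂ} {r : ℝ} (hr : 0 < r)
    (hf : DifferentiableOn ℂ f (ball 0 r)) (p : ℂ[X]) {n : ℕ}
    (hfp : (fun q ↦ f q - p.eval q) =O[𝓝 0] fun q ↦ q ^ n) :
    ∃ a : ℕ → ℂ, (∀ k < n, a k = p.coeff k) ∧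
      ∀ q ∈ ball (0 : ℂ) r, HasSum (fun k ↦ a k * q ^ k) (f q) := by
  obtain ⟨g, hg, hfg⟩ := exists_differentiableOn_eq_pow_mul (ball_mem_nhds 0 hr)
    (hf.sub p.differentiable.differentiableOn) hfp
  let b : ℕ → ℂ := fun k ↦ (k.factorial : ℂ)⁻¹ * iteratedDeriv k g 0
  refine ⟨fun k ↦ p.coeff k + if n ≤ k then b (k - n) else 0,
    fun k hk ↦ by simp [not_le.mpr hk], fun q hq ↦ ?_⟩
  have htaylor : HasSum (fun k ↦ b k * q ^ k) (g q) := by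
    simpa [b, smul_eq_mul, mul_comm, mul_left_comm] using Complex.hasSum_taylorSeries_on_ball hg hq
  have hshift : HasSum (fun k ↦ (if n ≤ k then b (k - n) else 0) * q ^ k) (q ^ n * g q) := by
    have hhead : ∑ k ∈ range n, (if n ≤ k then b (k - n) else 0) * q ^ k = 0 :=
      sum_eq_zero fun k hk ↦ by simp [not_le.mpr (mem_range.mp hk)]
    rw [← hasSum_nat_add_iff' n, hhead, sub_zero]
    simpa [pow_add, mul_comm, mul_assoc] using htaylor.mul_left (q ^ n)
  have hfq : f q = p.eval q + q ^ n * g q := by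
    rw [← hfg q hq, Pi.sub_apply, add_sub_cancel]
  simpa only [add_mul, hfq] using (p.hasSum_coeff_mul_pow q).add hshift

theorem norm_pow_lt_one_of_norm_lt_one {𝕜 : Type*} [NormedDivisionRing 𝕜] {q : 𝕜} (hq : ‖q‖ < 1)
    {n : ℕ} (hn : n ≠ 0) : ‖q ^ n‖ < 1 := by
  rw [norm_pow]
  exact pow_lt_one₀ (norm_nonneg q) hq hn

noncomputable def eulerFunction (q : ℂ) : ℂ := ∏' n : ℕ, (1 - q ^ (n + 1))

theorem differentiableOn_eulerFunction : DifferentiableOn ℂ eulerFunction (ball 0 1) :=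
  ModularForm.differentiableOn_tprod_one_sub_pow

theorem tendsto_eulerFunction_nhds_zero : Tendsto eulerFunction (𝓝 0) (𝓝 1) := by
  have h1 : eulerFunction 0 = 1 := by simp [eulerFunction]
  exact h1 ▸ (differentiableOn_eulerFunction.differentiableAt
    (ball_mem_nhds 0 one_pos)).continuousAt.tendsto

theorem eulerFunction_ne_zero {q : ℂ} (hq : ‖q‖ < 1) : eulerFunction q ≠ 0 := by
  refine tprod_one_add_ne_zero_of_summable (f := fun n ↦ -q ^ (n + 1)) (fun n ↦ ?_) ?_
  · rw [← sub_eq_add_neg, sub_ne_zero]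
    refine fun h ↦ (norm_pow_lt_one_of_norm_lt_one hq (Nat.succ_ne_zero n)).ne ?_
    rw [← h, norm_one]
  · simpa using (hasSum_norm_pow_add hq 0).summable

theorem eulerFunction_sub_prod_isBigO (m : ℕ) :
    (fun q ↦ eulerFunction q - ∏ k ∈ range m, (1 - q ^ (k + 1))) =O[𝓝 0]
      fun q ↦ q ^ (m + 1) := by
  have hhead : Tendsto (fun q : ℂ ↦ ∏ k ∈ range m, (1 - q ^ (k + 1))) (𝓝 0) (𝓝 1) := by
    simpa using (continuous_finsetProd (range m) fun k _ ↦
      (by fun_prop : Continuous fun q : ℂ ↦ 1 - q ^ (k + 1))).tendsto 0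
  refine (hhead.mul_isBigO (tprod_one_sub_pow_add_sub_one_isBigO m)).congr' ?_ .rfl
  filter_upwards [ball_mem_nhds (0 : ℂ) one_pos] with q hq
  rw [mem_ball_zero_iff] at hq
  rw [eulerFunction, ← Multipliable.prod_mul_tprod_nat_mul' (f := fun n ↦ 1 - q ^ (n + 1))
    (k := m) (multipliable_one_sub_pow_add hq m)]
  ring

theorem eulerFunction_sub_pentagonal_isBigO :
    (fun q ↦ eulerFunction q - (1 - q - q ^ 2 + q ^ 5)) =O[𝓝 0] fun q ↦ q ^ 7 := by
  let C : ℂ → ℂ := fun q ↦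
    2 - q ^ 2 - q ^ 3 - q ^ 4 - q ^ 5 + 2 * q ^ 7 + q ^ 9 - q ^ 12 - q ^ 13 + q ^ 14
  have hhead : (fun q : ℂ ↦ ∏ k ∈ range 6, (1 - q ^ (k + 1)) - (1 - q - q ^ 2 + q ^ 5))
      =O[𝓝 0] fun q ↦ q ^ 7 := by
    refine (((by fun_prop : Continuous C).tendsto 0).mul_isBigO (isBigO_refl _ _)).congr_left
      fun q ↦ ?_
    simp only [prod_range_succ, prod_range_zero, C]
    ring
  exact ((eulerFunction_sub_prod_isBigO 6).add hhead).congr_left fun q ↦ by ring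

theorem eulerFunction_pow_nine_sub_one_isBigO :
    (fun q : ℂ ↦ eulerFunction (q ^ 9) - 1) =O[𝓝 0] fun q ↦ q ^ 7 := by
  have h9 : Tendsto (fun q : ℂ ↦ q ^ 9) (𝓝 0) (𝓝 0) := by
    simpa using (continuous_pow 9).tendsto (0 : ℂ)
  refine (((eulerFunction_sub_prod_isBigO 0).comp_tendsto h9).trans ?_).congr_left fun q ↦ ?_
  · simpa [Function.comp_def] using (isLittleO_pow_pow (by norm_num : 7 < 9)).isBigO
  · simp

/-- Jacobi's identity `∏ (1 - qⁿ)³ = ∑ (-1)ᵏ (2k + 1) q^(k(k+1)/2)`, truncated below `q⁷`. -/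
noncomputable def jacobiPoly : ℂ[X] := 1 - 3 * X + 5 * X ^ 3 - 7 * X ^ 6

noncomputable def eulerQuotient (q : ℂ) : ℂ := eulerFunction q ^ 3 / eulerFunction (q ^ 9) ^ 3

theorem differentiableOn_eulerQuotient : DifferentiableOn ℂ eulerQuotient (ball 0 1) := by
  have hpow : Set.MapsTo (fun q : ℂ ↦ q ^ 9) (ball 0 1) (ball 0 1) := fun q hq ↦ by
    rw [mem_ball_zero_iff] at hq ⊢
    exact norm_pow_lt_one_of_norm_lt_one hq (by norm_num)
  refine (differentiableOn_eulerFunction.pow 3).div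
    ((differentiableOn_eulerFunction.comp (differentiableOn_pow 9) hpow).pow 3) fun q hq ↦ ?_
  exact pow_ne_zero 3 (eulerFunction_ne_zero (mem_ball_zero_iff.mp (hpow hq)))

theorem eulerQuotient_sub_jacobiPoly_isBigO :
    (fun q ↦ eulerQuotient q - jacobiPoly.eval q) =O[𝓝 0] fun q ↦ q ^ 7 := by
  let D : ℂ → ℂ := fun q ↦ -3 + 6 * q + 3 * q ^ 2 + 3 * q ^ 3 - 3 * q ^ 4 - 3 * q ^ 5 + q ^ 8
  have hcube : (fun q ↦ (1 - q - q ^ 2 + q ^ 5) ^ 3 - jacobiPoly.eval q) =O[𝓝 0]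
      fun q ↦ q ^ 7 := by
    refine (((by fun_prop : Continuous D).tendsto 0).mul_isBigO (isBigO_refl _ _)).congr_left
      fun q ↦ ?_
    simp only [jacobiPoly, eval_sub, eval_add, eval_mul, eval_pow, eval_X, eval_one, eval_ofNat, D]
    ring
  have hpent : Tendsto (fun q : ℂ ↦ 1 - q - q ^ 2 + q ^ 5) (𝓝 0) (𝓝 1) := by
    simpa using (by fun_prop : Continuous fun q : ℂ ↦ 1 - q - q ^ 2 + q ^ 5).tendsto 0
  have hE9 : Tendsto (fun q ↦ eulerFunction (q ^ 9)) (𝓝 0) (𝓝 1) :=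
    tendsto_eulerFunction_nhds_zero.comp (by simpa using (continuous_pow 9).tendsto (0 : ℂ))
  have hnum : (fun q ↦ eulerFunction q ^ 3 - jacobiPoly.eval q * eulerFunction (q ^ 9) ^ 3)
      =O[𝓝 0] fun q ↦ q ^ 7 :=
    (((eulerFunction_sub_pentagonal_isBigO.pow_sub_pow tendsto_eulerFunction_nhds_zero hpent
      3).add hcube).sub (jacobiPoly.continuous.tendsto 0 |>.mul_isBigO
      (eulerFunction_pow_nine_sub_one_isBigO.pow_sub_pow hE9 tendsto_const_nhds 3))).congr_left
      fun q ↦ by ring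
  refine (((hE9.pow 3).inv₀ (by norm_num)).mul_isBigO hnum).congr' ?_ .rfl
  filter_upwards [ball_mem_nhds (0 : ℂ) one_pos] with q hq
  have h9q : eulerFunction (q ^ 9) ≠ 0 := eulerFunction_ne_zero
    (norm_pow_lt_one_of_norm_lt_one (mem_ball_zero_iff.mp hq) (by norm_num))
  rw [eulerQuotient]
  field_simp

theorem qq_natCast_mul (k : ℕ) (w : ℂ) : qq (k * w) = qq w ^ k := by
  rw [qq, qq, ← Complex.exp_nat_mul]
  ring_nf

theorem dedekindEta_eq (w : ℂ) :
    dedekindEta w = Complex.exp (Real.pi * Complex.I * w / 12) * eulerFunction (qq w) := by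
  rw [dedekindEta, eulerFunction]
  congr 1
  refine tprod_congr fun n ↦ ?_
  rw [← qq_natCast_mul]
  push_cast
  rfl

theorem psi9_eq (z : ℍ) : psi9 z = (qq z)⁻¹ * eulerQuotient (qq z) := by
  have hq9 : qq (9 * z) = qq z ^ 9 := by exact_mod_cast qq_natCast_mul 9 z
  have hexp : Complex.exp (Real.pi * Complex.I * z / 12) ^ 3
      = Complex.exp (Real.pi * Complex.I * (9 * z) / 12) ^ 3 * (qq z)⁻¹ := by
    rw [qq, ← Complex.exp_neg, ← Complex.exp_nat_mul, ← Complex.exp_nat_mul, ← Complex.exp_add]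
    congr 1
    push_cast
    ring
  rw [psi9, dedekindEta_eq, dedekindEta_eq, hq9, eulerQuotient, mul_pow, mul_pow, hexp]
  field_simp

/-- `ψ⁹(z) = η(z)³/η(9z)³` has Fourier expansion beginning
`q⁻¹ - 3 + 5q² - 7q⁵ + ⋯`, with vanishing `q¹` coefficient. -/
theorem psi9_expansion : ∃ a : ℕ → ℂ, a 0 = 1 ∧ a 1 = -3 ∧ a 2 = 0 ∧ a 3 = 5 ∧
    a 4 = 0 ∧ a 5 = 0 ∧ a 6 = -7 ∧
    ∀ z : ℍ, psi9 z = ∑' n : ℕ, a n * qq z ^ ((n : ℤ) - 1) := by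
  obtain ⟨a, ha, hsum⟩ := exists_hasSum_of_isBigO_sub_eval one_pos differentiableOn_eulerQuotient
    jacobiPoly eulerQuotient_sub_jacobiPoly_isBigO
  refine ⟨a, ?_, ?_, ?_, ?_, ?_, ?_, ?_, fun z ↦ ?_⟩
  rotate_right
  · have hq : qq z ≠ 0 := Complex.exp_ne_zero _
    have hqz : qq z ∈ ball (0 : ℂ) 1 := mem_ball_zero_iff.mpr (norm_exp_two_pi_I_lt_one z)
    rw [psi9_eq, ← ((hsum _ hqz).mul_left _).tsum_eq]
    congr 1
    ext n
    rw [zpow_sub₀ hq, zpow_natCast, zpow_one]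
    ring
  all_goals rw [ha _ (by norm_num)]; simp [jacobiPoly, coeff_X, coeff_one, coeff_X_pow]
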